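/- arXiv:1803.09008 — 4 statements merged into one kernel-verified Lean document; each statement's English description precedes it below -/
import Mathlib

section
/- Let p be a prime, a ≥ 1, and q = p^a. Let H be a finite group and φ : H → (ℤ/qℤ)* a group homomorphism into the unit group of ℤ/qℤ, and let G = (ℤ/qℤ) ⋊_φ H be the semidirect product in which h ∈ H acts on the additive group ℤ/qℤ by multiplication by φ(h). If there exists an injective group homomorphism from G into GL_d(ℂ) (the group of invertible d × d complex matrices) for some positive integer d, then d ≥ |φ(H)|, the cardinality of the image of φ. -/
/-- The action of the unit group `(ℤ/qℤ)ˣ` on the additive group `ℤ/qℤ`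
(written multiplicatively) by multiplication `x ↦ u·x`. -/
def unitsAut (q : ℕ) : (ZMod q)ˣ →* MulAut (Multiplicative (ZMod q)) where
  toFun u :=
    { toFun := fun x => Multiplicative.ofAdd ((u : ZMod q) * x.toAdd)
      invFun := fun x => Multiplicative.ofAdd (((u⁻¹ : (ZMod q)ˣ) : ZMod q) * x.toAdd)
      left_inv := fun x => by simp [← mul_assoc]
      right_inv := fun x => by simp [← mul_assoc]
      map_mul' := fun x y => by simp [mul_add] }
  map_one' := by ext x; simp
  map_mul' u v := by ext x; simp [mul_assoc]

/-- If `q = pᵃ` is a prime power, `φ : H → (ℤ/qℤ)ˣ` a homomorphism,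
and the semidirect product `(ℤ/qℤ) ⋊_φ H` embeds into `GL_d(ℂ)`, then `d ≥ |φ(H)|`. -/
theorem stmt0 (p a : ℕ) (hp : p.Prime) (ha : 1 ≤ a) (q : ℕ) (hq : q = p ^ a)
    (H : Type) [Group H] [Finite H] (φ : H →* (ZMod q)ˣ)
    (d : ℕ) (hd : 0 < d)
    (f : (Multiplicative (ZMod q)) ⋊[(unitsAut q).comp φ] H →*
      Matrix.GeneralLinearGroup (Fin d) ℂ)
    (hf : Function.Injective f) :
    Nat.card φ.range ≤ d := by
  classical
  have hq0 : 0 < q := hq ▸ pow_pos hp.pos a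
  haveI : NeZero q := ⟨hq0.ne'⟩
  set V := (Fin d → ℂ)
  -- the representation as units of the endomorphism algebra
  let ρ : (Multiplicative (ZMod q)) ⋊[(unitsAut q).comp φ] H →* (V →ₗ[ℂ] V)ˣ :=
    (Matrix.GeneralLinearGroup.toLin.toMonoidHom).comp f
  have hρ : Function.Injective ρ :=
    Matrix.GeneralLinearGroup.toLin.injective.comp hf
  let x : Multiplicative (ZMod q) := Multiplicative.ofAdd (1 : ZMod q)
  let A : (V →ₗ[ℂ] V)ˣ := ρ (SemidirectProduct.inl x)
  let T : Module.End ℂ V := (A : V →ₗ[ℂ] V)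
  -- order of T is q
  have hordx : orderOf x = q := by
    simpa [x, orderOf_ofAdd_eq_addOrderOf] using ZMod.addOrderOf_one q
  have hordT : orderOf T = q := by
    rw [show T = ((A : (V →ₗ[ℂ] V)ˣ) : V →ₗ[ℂ] V) from rfl, orderOf_units]
    rw [orderOf_injective ρ hρ,
      orderOf_injective (SemidirectProduct.inl) SemidirectProduct.inl_injective, hordx]
  have hTq : T ^ q = 1 := by
    have := pow_orderOf_eq_one T
    rwa [hordT] at this
  -- T is semisimple, hence sum of eigenspaces is everything
  have hsq : Squarefree ((Polynomial.X : Polynomial ℂ) ^ q - 1) := by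
    refine (Polynomial.X_pow_sub_one_separable_iff.mpr ?_).squarefree
    exact_mod_cast Nat.cast_ne_zero.mpr hq0.ne'
  have haev : Polynomial.aeval T ((Polynomial.X : Polynomial ℂ) ^ q - 1) = 0 := by
    rw [map_sub, map_one, map_pow, Polynomial.aeval_X, hTq, sub_self]
  have hss : T.IsSemisimple :=
    Module.End.isSemisimple_of_squarefree_aeval_eq_zero hsq haev
  have hsup : ⨆ μ : ℂ, T.eigenspace μ = ⊤ := by
    have h := Module.End.iSup_maxGenEigenspace_eq_top T
    simp_rw [hss.isFinitelySemisimple.maxGenEigenspace_eq_eigenspace] at h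
    exact h
  -- pointwise power lemma
  have hpow : ∀ (μ : ℂ) (v : V), T v = μ • v → ∀ n : ℕ, (T ^ n) v = μ ^ n • v := by
    intro μ v hv n
    induction n with
    | zero => simp
    | succ n ih =>
      rw [pow_succ, Module.End.mul_apply, hv, map_smul, ih, smul_smul, pow_succ]
      ring_nf
  -- if all eigenvalues satisfy μ^m = 1 then T^m = 1
  have unip : ∀ m : ℕ, (∀ μ : ℂ, T.HasEigenvalue μ → μ ^ m = 1) → T ^ m = 1 := by
    intro m hall
    have hker : ⊤ ≤ LinearMap.ker (T ^ m - 1) := by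
      rw [← hsup]
      refine iSup_le fun μ => fun v hv => ?_
      rcases eq_or_ne (T.eigenspace μ) ⊥ with hbot | hne
      · rw [hbot, Submodule.mem_bot] at hv
        simp [hv]
      · have hμ : μ ^ m = 1 := hall μ hne
        have hv' : T v = μ • v := Module.End.mem_eigenspace_iff.mp hv
        simp [LinearMap.mem_ker, LinearMap.sub_apply, hpow μ v hv' m, hμ]
    have h0 : T ^ m - 1 = 0 := LinearMap.ker_eq_top.mp (top_le_iff.mp hker)
    exact sub_eq_zero.mp h0
  have hm_lt : p ^ (a - 1) < q := by
    rw [hq]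
    exact Nat.pow_lt_pow_right hp.one_lt (by omega)
  have hcontr : ¬ T ^ (p ^ (a - 1)) = 1 := by
    intro h
    have hdvd := orderOf_dvd_of_pow_eq_one h
    rw [hordT] at hdvd
    have := Nat.le_of_dvd (pow_pos hp.pos _) hdvd
    omega
  -- every eigenvalue is a q-th root of unity
  have hroot : ∀ μ : ℂ, T.HasEigenvalue μ → μ ^ q = 1 := by
    intro μ hμ
    obtain ⟨v, hv⟩ := hμ.exists_hasEigenvector
    have h1 : (T ^ q) v = μ ^ q • v := hv.pow_apply q
    rw [hTq] at h1
    have h2 : (μ ^ q - 1) • v = 0 := by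
      rw [sub_smul, one_smul, ← h1]
      simp
    rcases smul_eq_zero.mp h2 with h3 | h3
    · exact sub_eq_zero.mp h3
    · exact absurd h3 hv.2
  -- there is an eigenvalue of order exactly q
  have hprim : ∃ ζ : ℂ, T.HasEigenvalue ζ ∧ orderOf ζ = q := by
    by_contra hno
    push_neg at hno
    apply hcontr
    apply unip
    intro μ hμ
    have hq1 : μ ^ q = 1 := hroot μ hμ
    have hdvd : orderOf μ ∣ p ^ a := hq ▸ orderOf_dvd_of_pow_eq_one hq1
    obtain ⟨b, hb, hbd⟩ := (Nat.dvd_prime_pow hp).mp hdvd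
    have hba : b < a := by
      rcases lt_or_eq_of_le hb with h | h
      · exact h
      · exact absurd (by rw [hbd, h, ← hq]) (hno μ hμ)
    have : orderOf μ ∣ p ^ (a - 1) := hbd ▸ pow_dvd_pow p (by omega)
    exact orderOf_dvd_iff_pow_eq_one.mp this
  obtain ⟨ζ, hζ, hζq⟩ := hprim
  -- conjugation: ζ ^ val (φ h) is an eigenvalue for every h
  have htrans : ∀ h : H, T.HasEigenvalue (ζ ^ ((φ h : ZMod q)).val) := by
    intro h
    set n : ℕ := ((φ h : ZMod q)).val with hn
    have hkey : (SemidirectProduct.inl x : (Multiplicative (ZMod q)) ⋊[(unitsAut q).comp φ] H) ^ n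
        = SemidirectProduct.inr h * SemidirectProduct.inl x * (SemidirectProduct.inr h)⁻¹ := by
      rw [← map_inv, ← SemidirectProduct.inl_aut, ← map_pow]
      congr 1
      show x ^ n = (unitsAut q) (φ h) x
      have h1 : x ^ n = Multiplicative.ofAdd ((n : ZMod q)) := by
        rw [show (n : ZMod q) = n • (1 : ZMod q) by simp, ofAdd_nsmul]
      rw [h1]
      show Multiplicative.ofAdd ((n : ZMod q))
        = Multiplicative.ofAdd ((φ h : ZMod q) * (Multiplicative.ofAdd (1 : ZMod q)).toAdd)
      rw [hn, ZMod.natCast_rightInverse _]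
      simp
    have hA : A ^ n = ρ (SemidirectProduct.inr h) * A * (ρ (SemidirectProduct.inr h))⁻¹ := by
      rw [show A = ρ (SemidirectProduct.inl x) from rfl, ← map_pow, hkey, map_mul, map_mul,
        map_inv]
    set P : (V →ₗ[ℂ] V)ˣ := ρ (SemidirectProduct.inr h) with hP
    have hA' : A = P⁻¹ * A ^ n * P := by rw [hA]; group
    obtain ⟨v, hv⟩ := hζ.exists_hasEigenvector
    set w : V := ((P⁻¹ : (V →ₗ[ℂ] V)ˣ) : V →ₗ[ℂ] V) v with hw
    have hw0 : w ≠ 0 := by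
      intro h0
      apply hv.2
      have hPP : (P : V →ₗ[ℂ] V) (((P⁻¹ : (V →ₗ[ℂ] V)ˣ) : V →ₗ[ℂ] V) v) = v := by
        rw [← Module.End.mul_apply, ← Units.val_mul, mul_inv_cancel, Units.val_one,
          Module.End.one_apply]
      rw [← hPP, ← hw, h0, map_zero]
    have hTw : T w = ζ ^ n • w := by
      have h1 : T w = (((P⁻¹ * A ^ n * P : (V →ₗ[ℂ] V)ˣ) : V →ₗ[ℂ] V)) w := by
        rw [← hA']
      rw [h1, hw]
      have h2 : (P : V →ₗ[ℂ] V) (((P⁻¹ : (V →ₗ[ℂ] V)ˣ) : V →ₗ[ℂ] V) v) = v := by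
        rw [← Module.End.mul_apply, ← Units.val_mul, mul_inv_cancel, Units.val_one,
          Module.End.one_apply]
      rw [Units.val_mul, Units.val_mul, Module.End.mul_apply, Module.End.mul_apply, h2]
      have h3 : ((A ^ n : (V →ₗ[ℂ] V)ˣ) : V →ₗ[ℂ] V) v = ζ ^ n • v := by
        rw [Units.val_pow_eq_pow_val]
        exact hv.pow_apply n
      rw [h3, map_smul]
    exact Module.End.hasEigenvalue_of_hasEigenvector ⟨Module.End.mem_eigenspace_iff.mpr hTw, hw0⟩
  -- inject the image of φ into the eigenvalues
  let μfun : φ.range → ℂ := fun u => ζ ^ (((u : (ZMod q)ˣ) : ZMod q)).val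
  have hinj : Function.Injective μfun := by
    intro u1 u2 h12
    have h1 : (((u1 : (ZMod q)ˣ) : ZMod q)).val ∈ Set.Iio (orderOf ζ) := by
      rw [hζq]; exact ZMod.val_lt _
    have h2 : (((u2 : (ZMod q)ˣ) : ZMod q)).val ∈ Set.Iio (orderOf ζ) := by
      rw [hζq]; exact ZMod.val_lt _
    have hval := pow_injOn_Iio_orderOf h1 h2 h12
    have : ((u1 : (ZMod q)ˣ) : ZMod q) = ((u2 : (ZMod q)ˣ) : ZMod q) := by
      rw [← ZMod.natCast_rightInverse ((u1 : (ZMod q)ˣ) : ZMod q),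
        ← ZMod.natCast_rightInverse ((u2 : (ZMod q)ˣ) : ZMod q), hval]
    exact Subtype.ext (Units.ext this)
  have heig : ∀ u : φ.range, T.HasEigenvalue (μfun u) := by
    rintro ⟨u, hu⟩
    obtain ⟨h, rfl⟩ := hu
    exact htrans h
  have hvec : ∀ u : φ.range, ∃ v : V, T.HasEigenvector (μfun u) v :=
    fun u => (heig u).exists_hasEigenvector
  choose vs hvs using hvec
  haveI : Fintype ↥φ.range := Fintype.ofFinite _
  have hli : LinearIndependent ℂ vs :=
    Module.End.eigenvectors_linearIndependent' T μfun hinj vs hvs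
  have hcard : Fintype.card ↥φ.range ≤ Module.finrank ℂ V :=
    hli.fintype_card_le_finrank
  rw [Nat.card_eq_fintype_card]
  simpa [V, Module.finrank_fin_fun] using hcard
end

section
/- Let G be a finite group with an abelian subgroup A of index s = [G : A], and suppose there exists an injective group homomorphism from A into GL_d(ℂ). Set m = d·s. Then there exists an injective group homomorphism from G into the semidirect product (ℂ*)^m ⋊ Sym_m, where the symmetric group Sym_m acts on the m-fold direct product (ℂ*)^m of the multiplicative group ℂ* by permuting the factors. -/
/-- The permutation action of `Sym_m` on `(ℂ*)^m`, permuting the factors. -/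
def permAut (m : ℕ) : Equiv.Perm (Fin m) →* MulAut (Fin m → ℂˣ) where
  toFun σ :=
    { toFun := fun v => v ∘ σ.symm
      invFun := fun v => v ∘ σ
      left_inv := fun v => by ext i; simp
      right_inv := fun v => by ext i; simp
      map_mul' := fun v w => rfl }
  map_one' := by ext v i; simp [Equiv.Perm.one_def]
  map_mul' σ τ := by
    ext v i
    simp [Equiv.Perm.mul_def, Equiv.symm_trans_apply]

/-!
A finite abelian subgroup of `GL_d(ℂ)` consists of commuting matrices of finite order, which are
semisimple, so it is simultaneously diagonalisable: `A` embeds in `(ℂ*)^d`. Inducing this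
diagonal representation from `A` up to `G` (with the cocycle `x.out⁻¹ * g * (g⁻¹ • x).out` of the
transversal `Quotient.out`) gives a monomial representation of `G` of degree `d * [G : A]`. It is
faithful: an element acting trivially fixes the trivial coset, where its cocycle is `g` itself.
-/

open Module

namespace Module.End

variable {K V : Type*} [Field K] [AddCommGroup V] [Module K V]

open Polynomial in
theorem isSemisimple_of_pow_eq_one {f : End K V} {n : ℕ} (hn : (n : K) ≠ 0) (hf : f ^ n = 1) :
    f.IsSemisimple :=
  isSemisimple_of_squarefree_aeval_eq_zero (X_pow_sub_one_separable_iff.mpr hn).squarefree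
    (by simp [hf])

theorem exists_basis_of_commute_of_isFinitelySemisimple [IsAlgClosed K] [FiniteDimensional K V]
    {ι : Type*} (F : ι → End K V) (hcomm : ∀ i j, Commute (F i) (F j))
    (hss : ∀ i, (F i).IsFinitelySemisimple) :
    ∃ b : Basis (Fin (finrank K V)) K V, ∀ k, ∃ χ : ι → K, ∀ i, F i (b k) = χ i • b k := by
  set W : (ι → K) → Submodule K V := fun χ => ⨅ i, (F i).maxGenEigenspace (χ i)
  have hW : ⨆ χ, W χ = ⊤ :=
    iSup_iInf_maxGenEigenspace_eq_top_of_iSup_maxGenEigenspace_eq_top_of_commute F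
      (fun i j _ => hcomm i j) fun i => iSup_maxGenEigenspace_eq_top (F i)
  have mem_W {χ v} (hv : v ∈ W χ) (i : ι) : F i v = χ i • v := by
    have := (Submodule.mem_iInf _).mp hv i
    rwa [(hss i).maxGenEigenspace_eq_eigenspace, mem_eigenspace_iff] at this
  obtain ⟨s, hsW, hspan, hli⟩ := exists_linearIndependent K (⋃ χ, (W χ : Set V))
  simp only [Submodule.span_iUnion, Submodule.span_eq, hW] at hspan
  let b := Basis.mk hli (by rw [Subtype.range_coe, hspan])
  refine ⟨b.reindex (b.indexEquiv (finBasis K V)), fun k => ?_⟩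
  obtain ⟨χ, hχ⟩ := Set.mem_iUnion.mp (hsW ((b.indexEquiv (finBasis K V)).symm k).2)
  exact ⟨χ, by simpa [b] using mem_W hχ⟩

def eigencharacter {A : Type*} [Monoid A] (ρ : A →* End K V) {v : V} (hv : v ≠ 0) (χ : A → K)
    (hχ : ∀ a, ρ a v = χ a • v) : A →* K where
  toFun := χ
  map_one' := smul_left_injective K hv (by simpa using (hχ 1).symm)
  map_mul' a b := smul_left_injective K hv <| show χ (a * b) • v = (χ a * χ b) • v by
    rw [← hχ, map_mul, mul_apply, hχ, map_smul, hχ, smul_smul, mul_comm]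

theorem exists_injective_monoidHom_pi_units [IsAlgClosed K] [FiniteDimensional K V]
    {A : Type*} [Group A] [Finite A] [IsMulCommutative A] (hA : (Nat.card A : K) ≠ 0)
    (ρ : A →* End K V) (hρ : Function.Injective ρ) :
    ∃ φ : A →* (Fin (finrank K V) → Kˣ), Function.Injective φ := by
  have hss (a : A) : (ρ a).IsFinitelySemisimple := by
    refine (isSemisimple_of_pow_eq_one (n := orderOf a) (fun h => hA ?_) ?_).isFinitelySemisimple
    · obtain ⟨k, hk⟩ := orderOf_dvd_natCard a
      rw [hk, Nat.cast_mul, h, zero_mul]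
    · rw [← map_pow, pow_orderOf_eq_one, map_one]
  have hcomm (a b : A) : Commute (ρ a) (ρ b) := by
    rw [Commute, SemiconjBy, ← map_mul, ← map_mul, mul_comm' a b]
  obtain ⟨b, hb⟩ := exists_basis_of_commute_of_isFinitelySemisimple ρ hcomm hss
  choose χ hχ using hb
  refine ⟨MonoidHom.pi fun k => (eigencharacter ρ (b.ne_zero k) (χ k) (hχ k)).toHomUnits,
    (injective_iff_map_eq_one _).mpr fun a ha => hρ ?_⟩
  rw [map_one]
  refine b.ext fun k => ?_
  have : χ k a = 1 := congr_arg Units.val (congr_fun ha k)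
  rw [hχ, this, one_smul, one_apply]

end Module.End

open Equiv

def Equiv.Perm.arrowMulAut (ι M : Type*) [Monoid M] : Perm ι →* MulAut (ι → M) :=
  letI := arrowMulDistribMulAction (G := Perm ι) (A := ι) (M := M)
  MulDistribMulAction.toMulAut _ _

@[simp]
theorem Equiv.Perm.arrowMulAut_apply {ι M : Type*} [Monoid M] (σ : Perm ι) (v : ι → M) (i : ι) :
    Perm.arrowMulAut ι M σ v i = v (σ.symm i) :=
  rfl

def Equiv.Perm.arrowMulAutCongr {ι κ : Type*} (M : Type*) [Group M] (e : ι ≃ κ) :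
    (ι → M) ⋊[Perm.arrowMulAut ι M] Perm ι ≃* (κ → M) ⋊[Perm.arrowMulAut κ M] Perm κ :=
  SemidirectProduct.congr (MulEquiv.arrowCongr e (MulEquiv.refl M)) e.permCongrHom
    fun σ => by ext v k; simp [Equiv.permCongrHom, Equiv.permCongr_def]

namespace Subgroup

variable {G : Type*} [Group G] (A : Subgroup G)

theorem out_inv_mul_mul_out_smul_mem (g : G) (x : G ⧸ A) : x.out⁻¹ * g * (g⁻¹ • x).out ∈ A := by
  rw [mul_assoc, ← QuotientGroup.eq, ← smul_eq_mul, MulAction.Quotient.mk_smul_out,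
    QuotientGroup.out_eq', smul_inv_smul]

noncomputable def transversalCocycle (g : G) (x : G ⧸ A) : A :=
  ⟨x.out⁻¹ * g * (g⁻¹ • x).out, out_inv_mul_mul_out_smul_mem A g x⟩

theorem transversalCocycle_mul (g h : G) (x : G ⧸ A) :
    A.transversalCocycle (g * h) x =
      A.transversalCocycle g x * A.transversalCocycle h (g⁻¹ • x) := by
  ext
  simp only [transversalCocycle, Subgroup.coe_mul, mul_inv_rev, mul_smul]
  group

theorem eq_one_of_transversalCocycle_eq_one {g : G} {x : G ⧸ A} (hx : g • x = x)
    (h : A.transversalCocycle g x = 1) : g = 1 := by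
  have hx' : g⁻¹ • x = x := by rw [inv_smul_eq_iff, hx]
  have := congr_arg Subtype.val h
  simp only [transversalCocycle, hx', Subgroup.coe_one] at this
  simpa [mul_assoc] using congr_arg (x.out * · * x.out⁻¹) this

variable {M ι : Type*} [Group M]

noncomputable def inducedMonomial (φ : A →* (ι → M)) :
    G →* ((G ⧸ A) × ι → M) ⋊[Perm.arrowMulAut _ M] Perm ((G ⧸ A) × ι) :=
  MonoidHom.mk' (fun g => ⟨fun p => φ (A.transversalCocycle g p.1) p.2,
      (MulAction.toPerm g).prodCongr (Equiv.refl ι)⟩) fun g h => by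
    ext p
    · simp [transversalCocycle_mul, SemidirectProduct.mul_left]
    · simp [mul_smul]
    · rfl

@[simp]
theorem inducedMonomial_left (φ : A →* (ι → M)) (g : G) (p : (G ⧸ A) × ι) :
    (A.inducedMonomial φ g).left p = φ (A.transversalCocycle g p.1) p.2 :=
  rfl

@[simp]
theorem inducedMonomial_right (φ : A →* (ι → M)) (g : G) (p : (G ⧸ A) × ι) :
    (A.inducedMonomial φ g).right p = (g • p.1, p.2) :=
  rfl

theorem inducedMonomial_injective [Nonempty ι] {φ : A →* (ι → M)} (hφ : Function.Injective φ) :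
    Function.Injective (A.inducedMonomial φ) := by
  refine (injective_iff_map_eq_one _).mpr fun g hg => ?_
  obtain ⟨i⟩ := ‹Nonempty ι›
  have hleft := congr_arg SemidirectProduct.left hg
  have hright := congr_arg SemidirectProduct.right hg
  have hfix : g • ((1 : G) : G ⧸ A) = (1 : G) := by
    simpa using congr_arg (fun σ : Perm _ => (σ (((1 : G) : G ⧸ A), i)).1) hright
  refine A.eq_one_of_transversalCocycle_eq_one hfix (hφ ?_)
  ext j
  simpa using congr_fun hleft (((1 : G) : G ⧸ A), j)

end Subgroup

/-- If a finite group `G` has an abelian subgroup `A` of index `s`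
which embeds into `GL_d(ℂ)`, then with `m = d·s` the group `G` embeds into the
semidirect product `(ℂ*)^m ⋊ Sym_m` (the group of monomial matrices). -/
theorem stmt8 (G : Type) [Group G] [Finite G] (A : Subgroup G)
    (hA : ∀ x y : A, x * y = y * x) (s : ℕ) (hs : s = A.index)
    (d : ℕ) (hd : 0 < d) (f : A →* Matrix.GeneralLinearGroup (Fin d) ℂ)
    (hf : Function.Injective f) (m : ℕ) (hm : m = d * s) :
    ∃ g : G →* (Fin m → ℂˣ) ⋊[permAut m] Equiv.Perm (Fin m),
      Function.Injective g := by
  have : IsMulCommutative A := ⟨⟨hA⟩⟩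
  let ρ : A →* Module.End ℂ (Fin d → ℂ) :=
    Matrix.toLinAlgEquiv'.toRingEquiv.toMonoidHom.comp ((Units.coeHom _).comp f)
  have hρ : Function.Injective ρ :=
    Matrix.toLinAlgEquiv'.injective.comp (Units.val_injective.comp hf)
  obtain ⟨φ, hφ⟩ := Module.End.exists_injective_monoidHom_pi_units
    (Nat.cast_ne_zero.mpr Nat.card_pos.ne') ρ hρ
  have : Nonempty (Fin (finrank ℂ (Fin d → ℂ))) := ⟨⟨0, by simpa using hd⟩⟩
  have hcard : Nat.card ((G ⧸ A) × Fin (finrank ℂ (Fin d → ℂ))) = m := by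
    simp [hm, hs, Subgroup.index, mul_comm]
  -- `permAut m` unfolds to `Perm.arrowMulAut (Fin m) ℂˣ`, the codomain of `relabel`.
  let relabel := Perm.arrowMulAutCongr ℂˣ (Finite.equivFinOfCardEq hcard)
  exact ⟨relabel.toMonoidHom.comp (A.inducedMonomial φ),
    relabel.injective.comp (A.inducedMonomial_injective hφ)⟩
end

section
/- Let p be a prime, a ≥ 1, and q = p^a. Let V be a nonzero finite-dimensional complex vector space and ρ : ℤ/qℤ → GL(V) a faithful (injective) representation of the additive cyclic group ℤ/qℤ on V. Then there exist a nonzero vector v ∈ V and an injective group homomorphism χ : ℤ/qℤ → ℂ* such that ρ(x)·v = χ(x)·v for all x ∈ ℤ/qℤ. -/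
open Module Polynomial

/-- A faithful finite-dimensional complex representation of a
cyclic group `ℤ/qℤ` of prime power order `q = pᵃ` has a one-dimensional
subrepresentation on which the group acts through a faithful character:
there are a nonzero vector `v` and an injective character `χ : ℤ/qℤ → ℂ*`
with `ρ(x)·v = χ(x)·v` for all `x`. -/
theorem stmt9 (p a : ℕ) (hp : p.Prime) (ha : 1 ≤ a) (q : ℕ) (hq : q = p ^ a)
    (V : Type) [AddCommGroup V] [Module ℂ V] [FiniteDimensional ℂ V] [Nontrivial V]
    (ρ : Multiplicative (ZMod q) →* LinearMap.GeneralLinearGroup ℂ V)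
    (hρ : Function.Injective ρ) :
    ∃ (v : V) (χ : Multiplicative (ZMod q) →* ℂˣ), v ≠ 0 ∧ Function.Injective χ ∧
      ∀ x : Multiplicative (ZMod q), (ρ x : V →ₗ[ℂ] V) v = (χ x : ℂ) • v := by
  have hq0 : 0 < q := by rw [hq]; exact pow_pos hp.pos a
  haveI : NeZero q := ⟨hq0.ne'⟩
  set r : ℕ := p ^ (a - 1) with hr
  have hrq : r < q := by
    rw [hq, hr]
    exact Nat.pow_lt_pow_right hp.one_lt (by omega)
  have hr0 : 0 < r := by rw [hr]; exact pow_pos hp.pos _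
  -- the generator
  set g : LinearMap.GeneralLinearGroup ℂ V := ρ (Multiplicative.ofAdd (1 : ZMod q)) with hg
  have hpow : ∀ n : ℕ, (Multiplicative.ofAdd (1 : ZMod q)) ^ n
      = Multiplicative.ofAdd ((n : ZMod q)) := by
    intro n
    rw [← ofAdd_nsmul]
    norm_num
  have hgq : g ^ q = 1 := by
    rw [hg, ← map_pow, hpow, ← map_one ρ]
    congr 1
    simp [ZMod.natCast_self]
  have hgr : g ^ r ≠ 1 := by
    intro h
    rw [hg, ← map_pow, hpow, ← map_one ρ] at h
    have h2 := hρ h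
    have h3 : (r : ZMod q) = 0 := by
      simpa using h2
    rw [ZMod.natCast_eq_zero_iff] at h3
    exact absurd (Nat.le_of_dvd hr0 h3) (by omega)
  -- pass to linear endomorphisms
  set f : Module.End ℂ V := (g : V →ₗ[ℂ] V) with hf
  have hfq : f ^ q = 1 := by
    rw [hf, ← Units.val_pow_eq_pow_val, hgq]; rfl
  have hfr : f ^ r ≠ 1 := by
    intro h
    apply hgr
    ext w
    rw [Units.val_pow_eq_pow_val, ← hf, h]; rfl
  -- f is semisimple since it satisfies the squarefree polynomial X^q - 1
  have hsep : (X ^ q - C (1 : ℂ)).Separable :=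
    separable_X_pow_sub_C 1 (Nat.cast_ne_zero.mpr hq0.ne') one_ne_zero
  have hss : f.IsSemisimple := by
    refine Module.End.isSemisimple_of_squarefree_aeval_eq_zero hsep.squarefree ?_
    simp [map_sub, aeval_X_pow, hfq]
  have htop : ⨆ μ : ℂ, f.eigenspace μ = ⊤ := by
    have h1 := Module.End.iSup_maxGenEigenspace_eq_top f
    simpa [hss.isFinitelySemisimple.maxGenEigenspace_eq_eigenspace] using h1
  -- find an eigenvector whose eigenvalue has order exactly q
  set S : Submodule ℂ V := LinearMap.ker (f ^ r - 1) with hS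
  have hnot : ¬ ∀ μ : ℂ, f.eigenspace μ ≤ S := by
    intro h
    apply hfr
    have hle : (⊤ : Submodule ℂ V) ≤ S := htop ▸ iSup_le h
    ext w
    have hw : w ∈ S := hle trivial
    rw [hS, LinearMap.mem_ker, LinearMap.sub_apply, sub_eq_zero] at hw
    simpa using hw
  push_neg at hnot
  obtain ⟨μ, hμ⟩ := hnot
  obtain ⟨v, hv, hvS⟩ := SetLike.not_le_iff_exists.mp hμ
  have hv0 : v ≠ 0 := by rintro rfl; exact hvS (Submodule.zero_mem S)
  have hev : f.HasEigenvector μ v := ⟨hv, hv0⟩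
  have hμr : μ ^ r ≠ 1 := by
    intro h
    apply hvS
    rw [hS, LinearMap.mem_ker, LinearMap.sub_apply, hev.pow_apply r, h, sub_eq_zero]
    simp
  have hμq : μ ^ q = 1 := by
    have h1 := hev.pow_apply q
    rw [hfq] at h1
    have h2 : (μ ^ q - 1) • v = 0 := by
      rw [sub_smul, one_smul, ← h1]
      simp
    rcases smul_eq_zero.mp h2 with h | h
    · linear_combination h
    · exact absurd h hv0
  -- μ is a unit of order q
  obtain ⟨ζ, hζ⟩ : IsUnit μ := IsUnit.of_pow_eq_one hμq hq0.ne'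
  have hζq : ζ ^ q = 1 := Units.ext (by simp [hζ, hμq])
  have hζr : ζ ^ r ≠ 1 := by
    intro h
    apply hμr
    have := congrArg Units.val h
    simpa [hζ] using this
  have hord : orderOf ζ = q := by
    obtain ⟨b, hb, hbe⟩ := (Nat.dvd_prime_pow hp).mp (hq ▸ orderOf_dvd_of_pow_eq_one hζq)
    have hba : b = a := by
      by_contra hba
      have hb1 : b ≤ a - 1 := by omega
      have : orderOf ζ ∣ r := hbe ▸ pow_dvd_pow p hb1
      exact hζr (orderOf_dvd_iff_pow_eq_one.mp this)
    rw [hbe, hba, hq]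
  -- build the character
  set F : ZMod q →+ Additive ℂˣ := ZMod.lift q ⟨zmultiplesHom _ (Additive.ofMul ζ), by
    show ((q : ℤ) • Additive.ofMul ζ) = 0
    rw [← ofMul_zpow, zpow_natCast, hζq]
    rfl⟩ with hF
  set χ : Multiplicative (ZMod q) →* ℂˣ := AddMonoidHom.toMultiplicativeLeft F with hχdef
  have hχval : ∀ n : ℕ, χ (Multiplicative.ofAdd ((n : ZMod q))) = ζ ^ n := by
    intro n
    show Additive.toMul (F ((n : ZMod q))) = ζ ^ n
    have hc : ((n : ZMod q)) = (((n : ℤ) : ZMod q)) := by push_cast; ring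
    rw [hc, hF, ZMod.lift_coe]
    show Additive.toMul ((n : ℤ) • Additive.ofMul ζ) = ζ ^ n
    rw [← ofMul_zpow, zpow_natCast]
    rfl
  have hχinj : Function.Injective χ := by
    rw [injective_iff_map_eq_one]
    intro x hx
    set y := Multiplicative.toAdd x with hy
    have hxy : x = Multiplicative.ofAdd ((y.val : ZMod q)) := by
      rw [ZMod.natCast_val, ZMod.cast_id]; rfl
    rw [hxy, hχval] at hx
    have hdvd : q ∣ y.val := by
      have h := orderOf_dvd_of_pow_eq_one hx
      rwa [hord] at h
    have : y.val = 0 := Nat.eq_zero_of_dvd_of_lt hdvd (ZMod.val_lt y)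
    have hy0 : y = 0 := by
      rwa [ZMod.val_eq_zero] at this
    rw [hxy, hy0]
    simp
  refine ⟨v, χ, hv0, hχinj, ?_⟩
  intro x
  set n := (Multiplicative.toAdd x).val with hn
  have hx : x = (Multiplicative.ofAdd (1 : ZMod q)) ^ n := by
    rw [hpow, hn, ZMod.natCast_val, ZMod.cast_id]; rfl
  have hχx : χ (Multiplicative.ofAdd (1 : ZMod q) ^ n) = ζ ^ n := by
    rw [hpow]; exact hχval n
  rw [hx, map_pow, hχx]
  show ((g ^ n : LinearMap.GeneralLinearGroup ℂ V) : V →ₗ[ℂ] V) v = ((ζ ^ n : ℂˣ) : ℂ) • v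
  rw [Units.val_pow_eq_pow_val]
  have := hev.pow_apply n
  rw [← hf]
  simpa [hζ] using this
end

section
/- Let p be a prime, n ≥ 1, and let q be a prime such that p^n divides q − 1. Let φ : ℤ/p^nℤ → (ℤ/qℤ)* be an injective group homomorphism (which exists since (ℤ/qℤ)* is cyclic of order q − 1), and let Γ = (ℤ/qℤ) ⋊_φ (ℤ/p^nℤ) be the semidirect product in which the generator class t of ℤ/p^nℤ acts on the additive group ℤ/qℤ by multiplication by φ(t). If there exists an injective group homomorphism from Γ into GL_d(ℂ), then d ≥ p^n. -/
open Polynomial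

namespace spectrum

variable {𝕜 A : Type*} [Field 𝕜] [Ring A] [Algebra 𝕜 A]

theorem pow_mem_of_units_conj_eq_pow {a : A} {u : Aˣ} {k : ℕ} (h : ↑u * a * ↑u⁻¹ = a ^ k)
    {μ : 𝕜} (hμ : μ ∈ spectrum 𝕜 a) : μ ^ k ∈ spectrum 𝕜 a := by
  have := pow_image_subset a k ⟨μ, hμ, rfl⟩
  rwa [← h, units_conjugate] at this

theorem exists_ne_one_of_pow_eq_one [IsAlgClosed 𝕜] {a : A} {q : ℕ} (hq : (q : 𝕜) ≠ 0)
    (ha : a ^ q = 1) (ha1 : a ≠ 1) : ∃ μ ∈ spectrum 𝕜 a, μ ≠ 1 := by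
  contrapose! ha1
  obtain rfl | hq2 : q = 1 ∨ 2 ≤ q := by
    rcases q with _ | _ | q
    · exact absurd Nat.cast_zero hq
    · exact .inl rfl
    · exact .inr (by omega)
  · simpa using ha
  set P : 𝕜[X] := ∑ i ∈ Finset.range q, X ^ i
  have hP : 0 < P.degree := natDegree_pos_iff_degree_pos.mp <|
    zero_lt_one.trans_le <| le_natDegree_of_ne_zero <| by simp [P, coeff_X_pow]; omega
  have hunit : IsUnit (aeval a P) := by
    rw [← zero_notMem_iff 𝕜, map_polynomial_aeval_of_degree_pos a P hP]
    rintro ⟨μ, hμ, hμ0⟩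
    simp [P, ha1 μ hμ] at hμ0
    exact hq hμ0
  have hkill : aeval a P * (a - 1) = 0 := by simp [P, geom_sum_mul, ha]
  exact sub_eq_zero.mp (hunit.mul_right_eq_zero.mp hkill)

end spectrum

theorem Matrix.card_spectrum_le {n K : Type*} [Fintype n] [DecidableEq n] [Field K]
    (A : Matrix n n K) : Nat.card (spectrum K A) ≤ Fintype.card n := by
  classical
  calc Nat.card (spectrum K A) ≤ Nat.card (A.charpoly.roots.toFinset : Set K) := by
        refine Nat.card_mono (Finset.finite_toSet _) fun μ hμ => ?_
        rw [Finset.mem_coe, Multiset.mem_toFinset, mem_roots A.charpoly_monic.ne_zero]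
        exact mem_spectrum_iff_isRoot_charpoly.mp hμ
    _ ≤ A.charpoly.roots.card := by
        rw [Nat.card_coe_set_eq, Set.ncard_coe_finset]
        exact Multiset.toFinset_card_le _
    _ ≤ A.charpoly.natDegree := card_roots' _
    _ = Fintype.card n := A.charpoly_natDegree_eq_dim

theorem unitsAut_apply {q : ℕ} [NeZero q] (u : (ZMod q)ˣ) (x : Multiplicative (ZMod q)) :
    unitsAut q u x = x ^ (u : ZMod q).val := by
  change Multiplicative.ofAdd ((u : ZMod q) * x.toAdd) = x ^ (u : ZMod q).val
  apply Multiplicative.toAdd.injective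
  rw [toAdd_pow, toAdd_ofAdd, nsmul_eq_mul, ZMod.natCast_zmod_val]

theorem inl_conj_eq_pow_val {q m : ℕ} [NeZero q] (φ : Multiplicative (ZMod m) →* (ZMod q)ˣ)
    (x : Multiplicative (ZMod m)) (y : Multiplicative (ZMod q)) :
    (.inr x * .inl y * .inr x⁻¹ : Multiplicative (ZMod q) ⋊[(unitsAut q).comp φ] _) =
      .inl y ^ (φ x : ZMod q).val := by
  rw [← SemidirectProduct.inl_aut, MonoidHom.comp_apply, unitsAut_apply, map_pow]

theorem injective_pow_zmod_val {M : Type*} [Monoid M] {μ : M} {q : ℕ} [NeZero q]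
    (hμ : orderOf μ = q) : Function.Injective fun a : ZMod q => μ ^ a.val := by
  have hlt (a : ZMod q) : a.val ∈ Set.Iio (orderOf μ) := hμ.symm ▸ ZMod.val_lt a
  exact fun a b hab => ZMod.val_injective q (pow_injOn_Iio_orderOf (hlt a) (hlt b) hab)

theorem stmt10_general (p n : ℕ)
    (q : ℕ) (hq : q.Prime)
    (φ : Multiplicative (ZMod (p ^ n)) →* (ZMod q)ˣ) (hφ : Function.Injective φ)
    (d : ℕ)
    (f : (Multiplicative (ZMod q)) ⋊[(unitsAut q).comp φ] (Multiplicative (ZMod (p ^ n))) →*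
      Matrix.GeneralLinearGroup (Fin d) ℂ)
    (hf : Function.Injective f) :
    p ^ n ≤ d := by
  have := Fact.mk hq
  set g := SemidirectProduct.inl (φ := (unitsAut q).comp φ) (Multiplicative.ofAdd (1 : ZMod q))
  set M : Matrix (Fin d) (Fin d) ℂ := ↑(f g)
  have hMq : M ^ q = 1 := by
    rw [← Units.val_pow_eq_pow_val, ← map_pow, ← map_pow, ← ofAdd_nsmul]
    simp
  have hM1 : M ≠ 1 := by
    intro h
    have := SemidirectProduct.inl_injective (hf ((Units.ext h).trans (map_one f).symm))
    exact one_ne_zero (α := ZMod q) (by simpa using congrArg Multiplicative.toAdd this)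
  have := nontrivial_of_ne M 1 hM1
  obtain ⟨μ, hμ, hμ1⟩ := spectrum.exists_ne_one_of_pow_eq_one
    (Nat.cast_ne_zero (R := ℂ) |>.mpr hq.ne_zero) hMq hM1
  have hμq : orderOf μ = q := by
    refine orderOf_eq_prime ?_ hμ1
    simpa [hMq, spectrum.one_eq] using spectrum.pow_image_subset M q ⟨μ, hμ, rfl⟩
  have hroot (x) : μ ^ (φ x : ZMod q).val ∈ spectrum ℂ M := by
    refine spectrum.pow_mem_of_units_conj_eq_pow (u := f (SemidirectProduct.inr x)) ?_ hμ
    rw [← Units.val_pow_eq_pow_val, ← map_pow, ← inl_conj_eq_pow_val, map_mul, map_mul, map_inv,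
      map_inv, Units.val_mul, Units.val_mul]
  calc p ^ n = Nat.card (Multiplicative (ZMod (p ^ n))) := (Nat.card_zmod _).symm
    _ ≤ Nat.card (spectrum ℂ M) := Nat.card_le_card_of_injective (fun x => ⟨_, hroot x⟩)
        fun _ _ hxy => hφ (Units.ext (injective_pow_zmod_val hμq (congrArg Subtype.val hxy)))
    _ ≤ d := by simpa using M.card_spectrum_le

/-- Let `p` be a prime, `n ≥ 1`, and `q` a prime with `pⁿ ∣ q - 1`.
Let `φ : ℤ/pⁿℤ → (ℤ/qℤ)ˣ` be an injective homomorphism and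
`Γ = (ℤ/qℤ) ⋊_φ (ℤ/pⁿℤ)`. If `Γ` embeds into `GL_d(ℂ)`, then `d ≥ pⁿ`. -/
theorem stmt10 (p n : ℕ) (hp : p.Prime) (hn : 1 ≤ n)
    (q : ℕ) (hq : q.Prime) (hdvd : p ^ n ∣ q - 1)
    (φ : Multiplicative (ZMod (p ^ n)) →* (ZMod q)ˣ) (hφ : Function.Injective φ)
    (d : ℕ) (hd : 0 < d)
    (f : (Multiplicative (ZMod q)) ⋊[(unitsAut q).comp φ] (Multiplicative (ZMod (p ^ n))) →*
      Matrix.GeneralLinearGroup (Fin d) ℂ)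
    (hf : Function.Injective f) :
    p ^ n ≤ d :=
  stmt10_general p n q hq φ hφ d f hf
end
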